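/- arXiv:2512.11784 — 2 statements merged into one kernel-verified Lean document; each statement's English description precedes it below -/
import Mathlib

section
/- Let $\mu = \mathcal{N}(m,\Gamma)$ be a Gaussian measure on $\mathbb{R}^d$ with mean $m$ and covariance $\Gamma$, and let $K,Q,V \in \mathbb{R}^{d\times d}$. Then for every $z \in \mathbb{R}^d$, the softmax attention output $T^{K,Q,V}[\mu](z) := \frac{\int \exp(\langle Qz, Kz'\rangle) V z' \, d\mu(z')}{\int \exp(\langle Qz, Kz'\rangle) \, d\mu(z')}$ equals $Vm + V\Gamma K^\top Q z$. -/
open MeasureTheory ProbabilityTheory Matrix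

/-- The standard Gaussian measure on `Fin d → ℝ`. -/
noncomputable def stdGaussian (d : ℕ) : Measure (Fin d → ℝ) :=
  Measure.pi fun _ => gaussianReal 0 1

/-- The Gaussian measure `N(m, A * Aᵀ)` on `ℝ^d`, realized as the pushforward of the
standard Gaussian by the affine map `x ↦ m + A x`. -/
noncomputable def gaussianVec {d : ℕ} (m : Fin d → ℝ) (A : Matrix (Fin d) (Fin d) ℝ) :
    Measure (Fin d → ℝ) :=
  (stdGaussian d).map (fun x => m + A.mulVec x)

/-- Softmax attention with prompt measure `μ`, query token `z`, and parameters `K, Q, V`: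
`T^{K,Q,V}[μ](z) = (∫ exp(⟨Qz, Kz'⟩) V z' dμ(z')) / (∫ exp(⟨Qz, Kz'⟩) dμ(z'))`. -/
noncomputable def attn {d : ℕ} (K Q V : Matrix (Fin d) (Fin d) ℝ)
    (μ : Measure (Fin d → ℝ)) (z : Fin d → ℝ) : Fin d → ℝ :=
  (∫ z', Real.exp ((Q.mulVec z) ⬝ᵥ (K.mulVec z')) ∂μ)⁻¹ •
    ∫ z', Real.exp ((Q.mulVec z) ⬝ᵥ (K.mulVec z')) • V.mulVec z' ∂μ

/-!
Tilting the standard Gaussian `γ` by `exp ⟪b, x⟫` moves its mean to `b`: in one variable,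
`∫ x e^{bx} dγ = b ∫ e^{bx} dγ` is the derivative of the moment generating function `e^{b²/2}`,
and the product structure of `γ` gives the same coordinatewise. Hence attention on `γ` is the
linear map `z ↦ V Kᵀ Q z`. Pushing a prompt forward by `x ↦ m + A x` multiplies all attention
weights by the constant `exp ⟪Qz, Km⟫`, which cancels in the normalisation, and turns `(K, V)`
into `(K A, V A)` up to the offset `V m`; with `Γ = A Aᵀ` this is the claim.
-/

open Real

section GaussianReal
variable {μ : ℝ} {v : NNReal}

lemma integral_exp_mul_gaussianReal (t : ℝ) :
    ∫ x, exp (t * x) ∂gaussianReal μ v = exp (μ * t + v * t ^ 2 / 2) :=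
  congrFun mgf_fun_id_gaussianReal t

lemma integral_mul_exp_mul_gaussianReal (t : ℝ) :
    ∫ x, x * exp (t * x) ∂gaussianReal μ v = (μ + v * t) * exp (μ * t + v * t ^ 2 / 2) := by
  have hmgf : HasDerivAt (fun s => exp (μ * s + v * s ^ 2 / 2))
      ((μ + v * t) * exp (μ * t + v * t ^ 2 / 2)) t := by
    convert ((((hasDerivAt_id' t).const_mul μ).fun_add
      (((hasDerivAt_pow 2 t).const_mul (v : ℝ)).div_const 2))).exp using 1
    norm_num; ring
  rw [← hmgf.deriv, ← mgf_fun_id_gaussianReal, deriv_mgf (by simp)]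

lemma integrable_mul_exp_mul_gaussianReal (t : ℝ) :
    Integrable (fun x => x * exp (t * x)) (gaussianReal μ v) := by
  simpa using integrable_pow_mul_exp_of_mem_interior_integrableExpSet
    (X := fun x => x) (μ := gaussianReal μ v) (v := t) (by simp) 1

end GaussianReal

section StdGaussian
variable {d : ℕ} (b : Fin d → ℝ)

lemma exp_dotProduct_eq_prod (x : Fin d → ℝ) : exp (b ⬝ᵥ x) = ∏ j, exp (b j * x j) := by
  rw [dotProduct, exp_sum]

lemma exp_dotProduct_mul_apply_eq_prod (x : Fin d → ℝ) (i : Fin d) :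
    exp (b ⬝ᵥ x) * x i = ∏ j, (if j = i then x j else 1) * exp (b j * x j) := by
  rw [Finset.prod_mul_distrib, Finset.prod_ite_eq', if_pos (Finset.mem_univ i),
    exp_dotProduct_eq_prod, mul_comm]

lemma exp_dotProduct_self_div_two : exp (b ⬝ᵥ b / 2) = ∏ j, exp (b j ^ 2 / 2) := by
  rw [dotProduct, Finset.sum_div, exp_sum]
  simp_rw [sq]

lemma integrable_exp_dotProduct_stdGaussian :
    Integrable (fun x => exp (b ⬝ᵥ x)) (stdGaussian d) := by
  simp_rw [exp_dotProduct_eq_prod]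
  rw [_root_.stdGaussian]
  exact .fintype_prod fun j => integrable_exp_mul_gaussianReal (b j)

lemma integral_exp_dotProduct_stdGaussian :
    ∫ x, exp (b ⬝ᵥ x) ∂stdGaussian d = exp (b ⬝ᵥ b / 2) := by
  simp_rw [exp_dotProduct_eq_prod]
  rw [_root_.stdGaussian, integral_fintype_prod_eq_prod (fun j t => exp (b j * t)),
    exp_dotProduct_self_div_two]
  simp [integral_exp_mul_gaussianReal]

lemma integrable_exp_dotProduct_smul_stdGaussian :
    Integrable (fun x => exp (b ⬝ᵥ x) • x) (stdGaussian d) := by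
  refine Integrable.of_eval fun i => ?_
  simp_rw [Pi.smul_apply, smul_eq_mul, exp_dotProduct_mul_apply_eq_prod]
  rw [_root_.stdGaussian]
  refine .fintype_prod (f := fun j t => (if j = i then t else 1) * exp (b j * t)) fun j => ?_
  split_ifs
  · simpa using integrable_mul_exp_mul_gaussianReal (μ := 0) (v := 1) (b j)
  · simpa using integrable_exp_mul_gaussianReal (μ := 0) (v := 1) (b j)

lemma integral_exp_dotProduct_smul_stdGaussian :
    ∫ x, exp (b ⬝ᵥ x) • x ∂stdGaussian d = exp (b ⬝ᵥ b / 2) • b := by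
  ext i
  rw [eval_integral (integrable_exp_dotProduct_smul_stdGaussian b).eval]
  simp_rw [Pi.smul_apply, smul_eq_mul, exp_dotProduct_mul_apply_eq_prod]
  have h_factor (j : Fin d) : ∫ t, (if j = i then t else 1) * exp (b j * t) ∂gaussianReal 0 1 =
      (if j = i then b j else 1) * exp (b j ^ 2 / 2) := by
    split_ifs
    · simpa using integral_mul_exp_mul_gaussianReal (μ := 0) (v := 1) (b j)
    · simpa using integral_exp_mul_gaussianReal (μ := 0) (v := 1) (b j)
  rw [_root_.stdGaussian,
    integral_fintype_prod_eq_prod fun j t => (if j = i then t else 1) * exp (b j * t)]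
  simp_rw [h_factor, Finset.prod_mul_distrib, Finset.prod_ite_eq', exp_dotProduct_self_div_two]
  simp [mul_comm]

end StdGaussian

section MulVec
variable {α ι κ : Type*} [MeasurableSpace α] {μ : Measure α} [Fintype ι] [Fintype κ]

lemma integral_mulVec (M : Matrix κ ι ℝ) {f : α → ι → ℝ} (hf : Integrable f μ) :
    ∫ x, M *ᵥ f x ∂μ = M *ᵥ ∫ x, f x ∂μ :=
  (LinearMap.toContinuousLinearMap M.mulVecLin).integral_comp_comm hf

lemma MeasureTheory.Integrable.mulVec (M : Matrix κ ι ℝ) {f : α → ι → ℝ}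
    (hf : Integrable f μ) : Integrable (fun x => M *ᵥ f x) μ :=
  (LinearMap.toContinuousLinearMap M.mulVecLin).integrable_comp hf

end MulVec

section Attention
variable {d : ℕ}

lemma attn_stdGaussian (K Q V : Matrix (Fin d) (Fin d) ℝ) (z : Fin d → ℝ) :
    attn K Q V (stdGaussian d) z = (V * Kᵀ * Q) *ᵥ z := by
  set b := (Q *ᵥ z) ᵥ* K
  have h_exp (x : Fin d → ℝ) : Q *ᵥ z ⬝ᵥ K *ᵥ x = b ⬝ᵥ x := dotProduct_mulVec _ _ _
  have h_num : ∫ x, exp (b ⬝ᵥ x) • V *ᵥ x ∂stdGaussian d = V *ᵥ (exp (b ⬝ᵥ b / 2) • b) := by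
    simp_rw [← mulVec_smul]
    rw [integral_mulVec V (integrable_exp_dotProduct_smul_stdGaussian b),
      integral_exp_dotProduct_smul_stdGaussian]
  simp only [attn, h_exp, h_num, integral_exp_dotProduct_stdGaussian, mulVec_smul,
    inv_smul_smul₀ (exp_pos _).ne']
  simp only [b, ← mulVec_transpose, mulVec_mulVec, Matrix.mul_assoc]

lemma attn_map_affine (K Q V A : Matrix (Fin d) (Fin d) ℝ) (m z : Fin d → ℝ)
    {μ : Measure (Fin d → ℝ)}
    (h_int : Integrable (fun x => exp (Q *ᵥ z ⬝ᵥ (K * A) *ᵥ x)) μ)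
    (h_int_smul : Integrable (fun x => exp (Q *ᵥ z ⬝ᵥ (K * A) *ᵥ x) • x) μ)
    (h_ne : ∫ x, exp (Q *ᵥ z ⬝ᵥ (K * A) *ᵥ x) ∂μ ≠ 0) :
    attn K Q V (μ.map fun x => m + A *ᵥ x) z = V *ᵥ m + attn (K * A) Q (V * A) μ z := by
  unfold attn
  set e := fun x => exp (Q *ᵥ z ⬝ᵥ (K * A) *ᵥ x)
  have h_exp (x : Fin d → ℝ) :
      exp (Q *ᵥ z ⬝ᵥ K *ᵥ (m + A *ᵥ x)) = exp (Q *ᵥ z ⬝ᵥ K *ᵥ m) * e x := by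
    simp only [e, mulVec_add, dotProduct_add, exp_add, mulVec_mulVec]
  have h_val (x : Fin d → ℝ) : V *ᵥ (m + A *ᵥ x) = V *ᵥ m + (V * A) *ᵥ x := by
    rw [mulVec_add, mulVec_mulVec]
  have h_split : ∫ x, e x • (V *ᵥ m + (V * A) *ᵥ x) ∂μ =
      (∫ x, e x ∂μ) • V *ᵥ m + ∫ x, e x • (V * A) *ᵥ x ∂μ := by
    have h_int_val : Integrable (fun x => e x • (V * A) *ᵥ x) μ := by
      simpa only [mulVec_smul] using h_int_smul.mulVec (V * A)
    simp_rw [smul_add]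
    rw [integral_add (h_int.smul_const _) h_int_val, integral_smul_const]
  have h_meas : AEMeasurable (fun x : Fin d → ℝ => m + A *ᵥ x) μ := by fun_prop
  rw [integral_map h_meas (by fun_prop), integral_map h_meas (by fun_prop)]
  simp only [h_exp, h_val, mul_smul]
  rw [integral_const_mul, integral_smul, h_split, _root_.mul_inv_rev, mul_smul,
    inv_smul_smul₀ (exp_pos _).ne', smul_add, inv_smul_smul₀ h_ne]

end Attention

/-- For a Gaussian prompt measure `μ = N(m, Γ)`, the softmax attention output equals
`V m + V Γ Kᵀ Q z` for every query `z`. -/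
theorem attention_gaussian_is_affine {d : ℕ} (m : Fin d → ℝ)
    (A K Q V Γ : Matrix (Fin d) (Fin d) ℝ) (hΓ : Γ = A * Aᵀ) (z : Fin d → ℝ) :
    attn K Q V (gaussianVec m A) z = V.mulVec m + (V * Γ * Kᵀ * Q).mulVec z := by
  have h_exp (x : Fin d → ℝ) : Q *ᵥ z ⬝ᵥ (K * A) *ᵥ x = (Q *ᵥ z) ᵥ* (K * A) ⬝ᵥ x :=
    dotProduct_mulVec _ _ _
  have h_Z_pos : 0 < ∫ x, exp (Q *ᵥ z ⬝ᵥ (K * A) *ᵥ x) ∂stdGaussian d := by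
    simp only [h_exp, integral_exp_dotProduct_stdGaussian]
    positivity
  rw [gaussianVec, attn_map_affine K Q V A m z
    (by simpa only [h_exp] using integrable_exp_dotProduct_stdGaussian _)
    (by simpa only [h_exp] using integrable_exp_dotProduct_smul_stdGaussian _) h_Z_pos.ne',
    attn_stdGaussian, hΓ]
  simp only [Matrix.transpose_mul, Matrix.mul_assoc]
end

section
/- Let $\zeta \sim \chi^2(d)$ (chi-square with $d$ degrees of freedom) and let $c > 0$. Then $\mathbb{E}\left[\frac{\ln(L)^4}{L^{c/\max(1,\zeta)}}\right] \to 0$ as $L \to \infty$. -/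
/-!
On `{ζ ≤ √(ln L)}` the integrand is at most `ln(L)⁴ · exp(-c √(ln L))`, since there
`L^{c / max(1, ζ)} ≥ exp(ln L · c / √(ln L))`. Everywhere it is at most `ln(L)⁴`, and the
Chernoff bound `P(ζ > M) ≤ 2^{d/2} e^{-M/4}` makes the contribution of `{ζ > √(ln L)}` at most
`2^{d/2} ln(L)⁴ exp(-√(ln L)/4)`. Both bounds are `o(1)` because `exp(-b √t)` beats every
power of `t`.
-/

open MeasureTheory ProbabilityTheory Filter Real Set Topology

lemma integral_le_add_mul_measureReal_compl {α : Type*} [MeasurableSpace α] {μ : Measure α}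
    [IsProbabilityMeasure μ] {f : α → ℝ} {s : Set α} {A B : ℝ} (hs : MeasurableSet s)
    (hf : Integrable f μ) (hA₀ : 0 ≤ A) (hA : ∀ x ∈ s, f x ≤ A)
    (hB : ∀ x ∈ sᶜ, f x ≤ B) :
    ∫ x, f x ∂μ ≤ A + B * μ.real sᶜ := by
  calc ∫ x, f x ∂μ = ∫ x in s, f x ∂μ + ∫ x in sᶜ, f x ∂μ :=
        (integral_add_compl hs hf).symm
    _ ≤ ∫ _ in s, A ∂μ + ∫ _ in sᶜ, B ∂μ :=
        add_le_add (setIntegral_mono_on hf.integrableOn (integrableOn_const ..) hs hA)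
          (setIntegral_mono_on hf.integrableOn (integrableOn_const ..) hs.compl hB)
    _ = A * μ.real s + B * μ.real sᶜ := by simp only [setIntegral_const, smul_eq_mul, mul_comm]
    _ ≤ A + B * μ.real sᶜ := by gcongr; exact mul_le_of_le_one_right hA₀ measureReal_le_one

lemma gammaPDFReal_eq_mul_exp_mul_gammaPDFReal (a : ℝ) {r s : ℝ} (hs : 0 ≤ s) (hsr : s < r)
    (x : ℝ) :
    gammaPDFReal a r x = (r / (r - s)) ^ a * exp (-(s * x)) * gammaPDFReal a (r - s) x := by
  have hrs : 0 < r - s := sub_pos.mpr hsr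
  unfold gammaPDFReal
  split_ifs
  · have hexp : exp (-(r * x)) = exp (-(s * x)) * exp (-((r - s) * x)) := by
      rw [← exp_add]; ring_nf
    have hpow : (r - s) ^ a ≠ 0 := (rpow_pos_of_pos hrs a).ne'
    rw [div_rpow (by linarith) hrs.le, hexp]
    field_simp
  · simp

lemma gammaMeasure_real_Ioi_le {a r s : ℝ} (ha : 0 < a) (hs : 0 ≤ s) (hsr : s < r) (M : ℝ) :
    (gammaMeasure a r).real (Ioi M) ≤ (r / (r - s)) ^ a * exp (-(s * M)) := by
  have hrs : 0 < r - s := sub_pos.mpr hsr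
  have hK : 0 ≤ (r / (r - s)) ^ a := rpow_nonneg (div_nonneg (by linarith) hrs.le) a
  refine ENNReal.toReal_le_of_le_ofReal (by positivity) ?_
  rw [gammaMeasure, withDensity_apply _ measurableSet_Ioi]
  calc ∫⁻ x in Ioi M, gammaPDF a r x
      ≤ ∫⁻ x in Ioi M, ENNReal.ofReal ((r / (r - s)) ^ a * exp (-(s * M))) *
          gammaPDF a (r - s) x := by
        refine setLIntegral_mono' measurableSet_Ioi fun x hx => ?_
        rw [gammaPDF, gammaPDF, ← ENNReal.ofReal_mul (by positivity),
          gammaPDFReal_eq_mul_exp_mul_gammaPDFReal a hs hsr]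
        have hpdf := gammaPDFReal_nonneg ha hrs x
        gcongr
        exact hx.le
    _ ≤ ENNReal.ofReal ((r / (r - s)) ^ a * exp (-(s * M))) * ∫⁻ x, gammaPDF a (r - s) x := by
        rw [lintegral_const_mul' _ _ ENNReal.ofReal_ne_top]
        exact mul_le_mul_right (setLIntegral_le_lintegral _ _) _
    _ = ENNReal.ofReal ((r / (r - s)) ^ a * exp (-(s * M))) := by
        rw [lintegral_gammaPDF_eq_one ha hrs, mul_one]

lemma tendsto_pow_mul_exp_neg_mul_sqrt_atTop_nhds_zero (n : ℕ) {b : ℝ} (hb : 0 < b) :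
    Tendsto (fun t => t ^ n * exp (-(b * √t))) atTop (𝓝 0) := by
  refine ((tendsto_rpow_mul_exp_neg_mul_atTop_nhds_zero ((2 * n : ℕ) : ℝ) b hb).comp
    tendsto_sqrt_atTop).congr' ?_
  filter_upwards [eventually_ge_atTop 0] with t ht
  rw [Function.comp_apply, rpow_natCast, pow_mul, sq_sqrt ht, neg_mul]

lemma div_rpow_div_le_mul_exp_neg_sqrt_log {L c k m : ℝ} (hL : 0 < L) (hc : 0 ≤ c) (hk : 0 ≤ k)
    (hm : 0 < m) (hmL : m ≤ √(log L)) :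
    k / L ^ (c / m) ≤ k * exp (-(c * √(log L))) := by
  have hlog : 0 ≤ log L := by
    by_contra! h
    exact hm.not_ge (hmL.trans (sqrt_eq_zero_of_nonpos h.le).le)
  have hexp : exp (c * √(log L)) ≤ L ^ (c / m) := by
    rw [rpow_def_of_pos hL, ← div_sqrt (x := log L), mul_div_assoc', mul_comm c,
      mul_div_assoc]
    gcongr
  rw [exp_neg, ← div_eq_mul_inv]
  exact div_le_div_of_nonneg_left hk (exp_pos _) hexp

lemma integral_log_pow_div_rpow_le {μ : Measure ℝ} [IsProbabilityMeasure μ] (n : ℕ) {L c : ℝ}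
    (hL : 0 < L) (hc : 0 ≤ c) (hlogL : 1 ≤ log L) :
    ∫ x, log L ^ n / L ^ (c / max 1 x) ∂μ ≤
      log L ^ n * exp (-(c * √(log L))) + log L ^ n * μ.real (Ioi √(log L)) := by
  have hL₁ : 1 ≤ L := (log_nonneg_iff hL).mp (by linarith)
  have hk : 0 ≤ log L ^ n := pow_nonneg (by linarith) n
  have hle (x : ℝ) : log L ^ n / L ^ (c / max 1 x) ≤ log L ^ n :=
    div_le_self hk (one_le_rpow hL₁ (by positivity))
  have hint : Integrable (fun x => log L ^ n / L ^ (c / max 1 x)) μ :=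
    .of_bound (Measurable.aestronglyMeasurable (by fun_prop)) _ (.of_forall fun x => by
      rw [norm_of_nonneg (div_nonneg hk (by positivity))]; exact hle x)
  rw [← compl_Iic]
  exact integral_le_add_mul_measureReal_compl measurableSet_Iic hint (by positivity)
    (fun x hx => div_rpow_div_le_mul_exp_neg_sqrt_log hL hc hk (by positivity)
      (max_le (one_le_sqrt.mpr hlogL) hx))
    (fun x _ => hle x)

/-- If `ζ ∼ χ²(d)` (chi-square with `d` degrees of freedom, i.e. the Gamma distribution with
shape `d/2` and rate `1/2`) and `c > 0`, then `E[ln(L)⁴ / L^{c / max(1, ζ)}] → 0` as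
`L → ∞`. -/
theorem chi_square_polylog_decay (d : ℕ) (hd : 0 < d) (c : ℝ) (hc : 0 < c) :
    Tendsto
      (fun L : ℕ =>
        ∫ x, Real.log L ^ 4 / (L : ℝ) ^ (c / max 1 x) ∂(gammaMeasure (d / 2 : ℝ) (1 / 2)))
      atTop (nhds 0) := by
  set a : ℝ := d / 2
  have ha : 0 < a := by positivity
  have := isProbabilityMeasure_gammaMeasure ha (by norm_num : (0 : ℝ) < 1 / 2)
  set K : ℝ := (1 / 2 / (1 / 2 - 1 / 4)) ^ a
  have hlog : Tendsto (fun L : ℕ => log L) atTop atTop :=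
    tendsto_log_atTop.comp tendsto_natCast_atTop_atTop
  have hbound := ((tendsto_pow_mul_exp_neg_mul_sqrt_atTop_nhds_zero 4 hc).add
    ((tendsto_pow_mul_exp_neg_mul_sqrt_atTop_nhds_zero 4 (b := 1 / 4) (by norm_num)).const_mul
      K)).comp hlog
  rw [mul_zero, add_zero] at hbound
  refine tendsto_of_tendsto_of_tendsto_of_le_of_le' tendsto_const_nhds hbound
    (.of_forall fun L => integral_nonneg fun x => by positivity) ?_
  filter_upwards [hlog.eventually_ge_atTop 1, eventually_gt_atTop 0] with L hlogL hL
  refine (integral_log_pow_div_rpow_le 4 (by positivity) hc.le hlogL).trans ?_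
  rw [Function.comp_apply, mul_left_comm K]
  gcongr
  exact gammaMeasure_real_Ioi_le ha (by norm_num) (by norm_num) _
end
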